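/- Let T be a triangulated category and S ⊆ T a pre-aisle. Then S equals T^{≤0} for some t-structure (T^{≤0}, T^{≥0}) on T if and only if, for every object t of T, the functor H_S(−,t) : Tᵒᵖ → Ab is representable. -/

import Mathlib

open CategoryTheory CategoryTheory.Limits CategoryTheory.Pretriangulated ZeroObject

universe v u

variable {C : Type u} [Category.{v} C] [Preadditive C] [HasZeroObject C]
  [HasShift C ℤ] [∀ n : ℤ, (CategoryTheory.shiftFunctor C n).Additive] [Pretriangulated C]
  [IsTriangulated C]

/-- A pre-aisle in a triangulated category: a full additive subcategory closed under
suspension, extensions and direct summands. -/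
structure IsPreaisle (S : Set C) : Prop where
  zero_mem : (0 : C) ∈ S
  shift_mem : ∀ s ∈ S, (s⟦(1 : ℤ)⟧ : C) ∈ S
  ext_mem : ∀ T : Triangle C, T ∈ (distTriang C) → T.obj₁ ∈ S → T.obj₃ ∈ S → T.obj₂ ∈ S
  summand_mem : ∀ x s : C, s ∈ S → ∀ (i : x ⟶ s) (r : s ⟶ x), i ≫ r = 𝟙 x → x ∈ S

/-- The class `H̃_S(t,t')` of pairs of composable morphisms `t ⟶ s ⟶ t'` with `s ∈ S`. -/
structure HTilde (S : Set C) (t t' : C) where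
  s : C
  mem : s ∈ S
  f : t ⟶ s
  g : s ⟶ t'

/-- The relation `R(t,t')` on `H̃_S(t,t')`. -/
def HRel (S : Set C) {t t' : C} (h h' : HTilde S t t') : Prop :=
  ∃ (s'' : C) (_ : s'' ∈ S) (u : h.s ⟶ s'') (u' : h'.s ⟶ s'') (v : s'' ⟶ t'),
    h.f ≫ u = h'.f ≫ u' ∧ u ≫ v = h.g ∧ u' ≫ v = h'.g

/-- The quotient `H_S(t,t')` of `H̃_S(t,t')` by the equivalence relation `R(t,t')`. -/
def HQuot (S : Set C) (t t' : C) := Quot (HRel S (t := t) (t' := t'))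

/-!
By Yoneda, a representation of `H_S(-,t)` amounts to a coreflection `α : x ⟶ t` of `t` into
`S`, because `H_S(w,t) = Hom(w,t)` for `w ∈ S`; transitivity of `R(t,t')` rests on weak
pushouts in `S`, built as cones. A morphism `α : x ⟶ t` with `x ∈ S` is a coreflection exactly
when its cone `z` is right orthogonal to `S`, and these triangles `x ⟶ t ⟶ z` are the
truncation triangles of the t-structure whose aisle is `S` and whose co-aisle is the right
orthogonal of `S`, shifted by one.
-/

section

omit [Preadditive C] [HasZeroObject C] [HasShift C ℤ] [∀ n : ℤ, (shiftFunctor C n).Additive]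
  [Pretriangulated C] [IsTriangulated C]

variable {S : Set C}

abbrev HQuot.mk {y t s : C} (hs : s ∈ S) (f : y ⟶ s) (g : s ⟶ t) : HQuot S y t :=
  Quot.mk _ ⟨s, hs, f, g⟩

def HTilde.precomp {y' y t : C} (h : HTilde S y t) (e : y' ⟶ y) : HTilde S y' t :=
  ⟨h.s, h.mem, e ≫ h.f, h.g⟩

/-- The action of the functor `H_S(-,t)` on a morphism `e`. -/
def HQuot.precomp {y' y t : C} (e : y' ⟶ y) : HQuot S y t → HQuot S y' t :=
  Quot.map (HTilde.precomp · e) fun _ _ ⟨s'', hs'', u, u', v, hf, hu, hu'⟩ =>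
    ⟨s'', hs'', u, u', v, by simp only [HTilde.precomp, Category.assoc, hf], hu, hu'⟩

lemma HQuot.mk_comp_eq_mk_comp {y t s s' : C} (hs : s ∈ S) (hs' : s' ∈ S) (f : y ⟶ s)
    (k : s ⟶ s') (g : s' ⟶ t) : HQuot.mk hs f (k ≫ g) = HQuot.mk hs' (f ≫ k) g :=
  Quot.sound ⟨s', hs', k, 𝟙 s', g, by simp, rfl, Category.id_comp g⟩

/-- `α` is the counit at `t` of a right adjoint to the inclusion of `S`. -/
structure IsCoreflection (S : Set C) {x t : C} (α : x ⟶ t) : Prop where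
  mem : x ∈ S
  bijective {w : C} : w ∈ S → Function.Bijective fun g : w ⟶ x => g ≫ α

namespace IsCoreflection

variable {x t : C} {α : x ⟶ t}

lemma hom_ext (hα : IsCoreflection S α) {w : C} (hw : w ∈ S) {g g' : w ⟶ x}
    (h : g ≫ α = g' ≫ α) : g = g' :=
  (hα.bijective hw).1 h

lemma exists_lift (hα : IsCoreflection S α) {w : C} (hw : w ∈ S) (c : w ⟶ t) :
    ∃ g : w ⟶ x, g ≫ α = c :=
  (hα.bijective hw).2 c

end IsCoreflection

end

section

omit [IsTriangulated C]

variable {S : Set C}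

namespace IsPreaisle

lemma mem_of_iso (hS : IsPreaisle S) {x y : C} (e : x ≅ y) (hy : y ∈ S) : x ∈ S :=
  hS.summand_mem x y hy e.hom e.inv e.hom_inv_id

lemma isClosedUnderIsomorphisms (hS : IsPreaisle S) :
    ObjectProperty.IsClosedUnderIsomorphisms (· ∈ S) :=
  ⟨fun e hx => hS.mem_of_iso e.symm hx⟩

lemma biprod_mem (hS : IsPreaisle S) {a b : C} (ha : a ∈ S) (hb : b ∈ S) : (a ⊞ b : C) ∈ S :=
  hS.ext_mem _ (binaryBiproductTriangle_distinguished a b) ha hb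

lemma rightOrthogonal_shift_neg_one (hS : IsPreaisle S) {z : C}
    (hz : ObjectProperty.rightOrthogonal (· ∈ S) z) :
    ObjectProperty.rightOrthogonal (· ∈ S) (z⟦(-1 : ℤ)⟧) := by
  intro w f hw
  obtain ⟨g, rfl⟩ := ((shiftEquiv C (1 : ℤ)).toAdjunction.homEquiv _ _).surjective f
  rw [Adjunction.homEquiv_unit, hz g (hS.shift_mem w hw), Functor.map_zero, comp_zero]
  rfl

/-- The weak pushout is the cone of `c ⟶ a ⊞ b`, an extension of `c⟦1⟧` by `a ⊞ b`. -/
lemma exists_weakPushout (hS : IsPreaisle S) {a b c : C} (ha : a ∈ S) (hb : b ∈ S)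
    (hc : c ∈ S) (i : c ⟶ a) (j : c ⟶ b) :
    ∃ (w : C) (_ : w ∈ S) (p : a ⟶ w) (q : b ⟶ w), i ≫ p = j ≫ q ∧
      ∀ {t : C} (v₁ : a ⟶ t) (v₂ : b ⟶ t), i ≫ v₁ = j ≫ v₂ →
        ∃ v : w ⟶ t, p ≫ v = v₁ ∧ q ≫ v = v₂ := by
  obtain ⟨w, π, δ, mem⟩ := distinguished_cocone_triangle (biprod.lift i (-j))
  have hw : w ∈ S := hS.ext_mem _ (rot_of_distTriang _ mem) (hS.biprod_mem ha hb)
    (hS.shift_mem c hc)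
  have hπ : biprod.lift i (-j) ≫ π = 0 := comp_distTriang_mor_zero₁₂ _ mem
  refine ⟨w, hw, biprod.inl ≫ π, biprod.inr ≫ π, ?_, fun v₁ v₂ hv => ?_⟩
  · simpa only [biprod.lift_eq, Preadditive.add_comp, Preadditive.neg_comp, Category.assoc,
      add_neg_eq_zero] using hπ
  · obtain ⟨v, hv⟩ : ∃ v : w ⟶ _, biprod.desc v₁ v₂ = π ≫ v :=
      Triangle.yoneda_exact₂ _ mem _ (show biprod.lift i (-j) ≫ biprod.desc v₁ v₂ = 0 by
        rw [biprod.lift_desc, Preadditive.neg_comp, hv, add_neg_cancel])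
    exact ⟨v, by rw [Category.assoc, ← hv, biprod.inl_desc],
      by rw [Category.assoc, ← hv, biprod.inr_desc]⟩

lemma equivalence_hRel (hS : IsPreaisle S) (t t' : C) :
    Equivalence (HRel S (t := t) (t' := t')) where
  refl h := ⟨h.s, h.mem, 𝟙 _, 𝟙 _, h.g, rfl, Category.id_comp _, Category.id_comp _⟩
  symm := fun ⟨s'', hs'', u, u', v, hf, hu, hu'⟩ => ⟨s'', hs'', u', u, v, hf.symm, hu', hu⟩
  trans := by
    rintro h₁ h₂ h₃ ⟨a, ha, u₁, u₂, v₁, hf₁₂, hu₁, hu₂⟩ ⟨b, hb, u₂', u₃, v₂, hf₂₃, hu₂', hu₃⟩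
    obtain ⟨w, hw, p, q, hpq, hdesc⟩ := hS.exists_weakPushout ha hb h₂.mem u₂ u₂'
    obtain ⟨v, hpv, hqv⟩ := hdesc v₁ v₂ (hu₂.trans hu₂'.symm)
    refine ⟨w, hw, u₁ ≫ p, u₃ ≫ q, v, ?_, by rw [Category.assoc, hpv, hu₁],
      by rw [Category.assoc, hqv, hu₃]⟩
    rw [reassoc_of% hf₁₂, hpq, reassoc_of% hf₂₃]

lemma hRel_of_mk_eq (hS : IsPreaisle S) {t t' : C} {h h' : HTilde S t t'}
    (e : (Quot.mk _ h : HQuot S t t') = Quot.mk _ h') : HRel S h h' :=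
  ((hS.equivalence_hRel t t').quot_mk_eq_iff h h').1 e

lemma bijective_mk_id (hS : IsPreaisle S) {w : C} (hw : w ∈ S) (t : C) :
    Function.Bijective fun c : w ⟶ t => HQuot.mk hw (𝟙 w) c := by
  refine ⟨fun c c' hcc' => ?_, ?_⟩
  · obtain ⟨s'', -, u, u', v, hf, hu, hu'⟩ := hS.hRel_of_mk_eq hcc'
    dsimp only at hf hu hu'
    rw [Category.id_comp, Category.id_comp] at hf
    rw [← hu, ← hu', hf]
  · rintro ⟨s, hs, f, g⟩
    refine ⟨f ≫ g, (HQuot.mk_comp_eq_mk_comp hw hs (𝟙 w) f g).trans ?_⟩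
    rw [Category.id_comp]

end IsPreaisle

namespace IsCoreflection

variable {x t z : C} {α : x ⟶ t}

/-- The extension `x ⟶ y ⟶ w` classified by `c ≫ γ` lies in `S`, so `α` factors through
`x ⟶ y`; by the universal property of `α` this map is split mono, and the extension splits. -/
lemma comp_mor₃_eq_zero (hS : IsPreaisle S) (hα : IsCoreflection S α) {β : t ⟶ z}
    {γ : z ⟶ x⟦(1 : ℤ)⟧} (mem : Triangle.mk α β γ ∈ distTriang C) {w : C} (hw : w ∈ S)
    (c : w ⟶ z) : c ≫ γ = 0 := by
  obtain ⟨y, f, g, mem'⟩ := distinguished_cocone_triangle₂ (c ≫ γ)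
  obtain ⟨m, hm, -⟩ : ∃ m : y ⟶ t, f ≫ m = 𝟙 x ≫ α ∧ g ≫ c = m ≫ β :=
    complete_distinguished_triangle_morphism₂ _ _ mem' mem (𝟙 x) c
      (show (c ≫ γ) ≫ (𝟙 x)⟦(1 : ℤ)⟧' = c ≫ γ by
        rw [CategoryTheory.Functor.map_id, Category.comp_id])
  have hy : y ∈ S := hS.ext_mem _ mem' hα.mem hw
  obtain ⟨r, hr⟩ := hα.exists_lift hy m
  have hfr : f ≫ r = 𝟙 x := hα.hom_ext hα.mem <| by
    rw [Category.assoc, hr, Category.id_comp]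
    exact hm.trans (Category.id_comp α)
  have : Mono f := mono_of_mono_fac hfr
  exact Triangle.mor₃_eq_zero_of_mono₁ _ mem' this

lemma rightOrthogonal_obj₃ (hS : IsPreaisle S) (hα : IsCoreflection S α) {β : t ⟶ z}
    {γ : z ⟶ x⟦(1 : ℤ)⟧} (mem : Triangle.mk α β γ ∈ distTriang C) :
    ObjectProperty.rightOrthogonal (· ∈ S) z := by
  intro w c hw
  obtain ⟨b, rfl⟩ : ∃ b : w ⟶ t, c = b ≫ β :=
    Triangle.coyoneda_exact₃ _ mem c (hα.comp_mor₃_eq_zero hS mem hw c)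
  obtain ⟨g, rfl⟩ := hα.exists_lift hw b
  have hαβ : α ≫ β = 0 := comp_distTriang_mor_zero₁₂ _ mem
  rw [Category.assoc, hαβ, comp_zero]

lemma bijective_mk (hS : IsPreaisle S) (hα : IsCoreflection S α) (y : C) :
    Function.Bijective fun g : y ⟶ x => HQuot.mk hα.mem g α := by
  refine ⟨fun g g' hgg' => ?_, ?_⟩
  · obtain ⟨s, hs, u, u', v, hf, hu, hu'⟩ := hS.hRel_of_mk_eq hgg'
    dsimp only at hf hu hu'
    obtain ⟨r, hr⟩ := hα.exists_lift hs v
    have hur : u ≫ r = 𝟙 x := hα.hom_ext hα.mem (by simpa [hr] using hu)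
    have hur' : u' ≫ r = 𝟙 x := hα.hom_ext hα.mem (by simpa [hr] using hu')
    calc g = g ≫ u ≫ r := by rw [hur, Category.comp_id]
      _ = g' ≫ u' ≫ r := by rw [reassoc_of% hf]
      _ = g' := by rw [hur', Category.comp_id]
  · rintro ⟨s, hs, f, c⟩
    obtain ⟨k, rfl⟩ := hα.exists_lift hs c
    exact ⟨f ≫ k, (HQuot.mk_comp_eq_mk_comp hs hα.mem f k α).symm⟩

end IsCoreflection

namespace IsPreaisle

variable {x t z : C} {α : x ⟶ t}

lemma isCoreflection_of_distTriang (hS : IsPreaisle S) {β : t ⟶ z} {γ : z ⟶ x⟦(1 : ℤ)⟧}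
    (mem : Triangle.mk α β γ ∈ distTriang C) (hx : x ∈ S)
    (hz : ObjectProperty.rightOrthogonal (· ∈ S) z) : IsCoreflection S α where
  mem := hx
  bijective {w} hw := by
    refine ⟨(injective_iff_map_eq_zero (Preadditive.rightComp w α)).2 fun g hg => ?_,
      fun c => ?_⟩
    · obtain ⟨p, rfl⟩ := Triangle.coyoneda_exact₂ _ (inv_rot_of_distTriang _ mem) g hg
      rw [hS.rightOrthogonal_shift_neg_one hz p hw]
      exact zero_comp
    · obtain ⟨g, hg⟩ := Triangle.coyoneda_exact₂ _ mem c (hz _ hw)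
      exact ⟨g, hg.symm⟩

/-- Yoneda: the universal element `[x ⟶ s ⟶ t]` of a representation yields the coreflection
`x ⟶ s ⟶ t`, and `x` is a retract of `s`. -/
lemma exists_isCoreflection_of_represents (hS : IsPreaisle S)
    {φ : ∀ y : C, (y ⟶ x) → HQuot S y t} (hφ : ∀ y, Function.Bijective (φ y))
    (hnat : ∀ {y' y : C} (e : y' ⟶ y) (g : y ⟶ x) (h : HTilde S y t),
      φ y g = Quot.mk _ h → φ y' (e ≫ g) = Quot.mk _ (h.precomp e)) :
    ∃ α : x ⟶ t, IsCoreflection S α := by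
  obtain ⟨⟨s, hs, f, g⟩, h₀⟩ := Quot.exists_rep (φ x (𝟙 x))
  have hφ_eq : ∀ {y : C} (k : y ⟶ x), φ y k = HQuot.mk hs (k ≫ f) g := fun k => by
    simpa [HTilde.precomp] using hnat k (𝟙 x) _ h₀.symm
  obtain ⟨r, hr⟩ := (hφ s).2 (HQuot.mk hs (𝟙 s) g)
  have hfr : f ≫ r = 𝟙 x := (hφ x).1 <| by
    rw [hnat f r _ hr, ← h₀, HTilde.precomp, Category.comp_id]
  refine ⟨f ≫ g, hS.summand_mem x s hs f r hfr, fun {w} hw => ?_⟩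
  have hcomp : (fun c => HQuot.mk hw (𝟙 w) c) ∘ (fun k : w ⟶ x => k ≫ f ≫ g) = φ w := by
    funext k
    simpa [hφ_eq] using HQuot.mk_comp_eq_mk_comp hw hs (𝟙 w) (k ≫ f) g
  exact (Function.Bijective.of_comp_iff' (hS.bijective_mk_id hw t) _).1 (hcomp ▸ hφ w)

/-- The t-structure with aisle `S`: `Y` is `≥ n` when `Y⟦n - 1⟧` is right orthogonal to `S`. -/
def tStructure (hS : IsPreaisle S) (h : ∀ t : C, ∃ (x : C) (α : x ⟶ t), IsCoreflection S α) :
    Triangulated.TStructure C :=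
  haveI := hS.isClosedUnderIsomorphisms
  { le n := ObjectProperty.shift (· ∈ S) n
    ge n := (ObjectProperty.rightOrthogonal (· ∈ S)).shift (n - 1)
    le_shift n a n' h X hX := by
      change ((ObjectProperty.shift (· ∈ S) n').shift a) X
      rwa [ObjectProperty.shift_shift _ a n' n h]
    ge_shift n a n' h X hX := by
      change (((ObjectProperty.rightOrthogonal (· ∈ S)).shift (n' - 1)).shift a) X
      rwa [ObjectProperty.shift_shift _ a (n' - 1) (n - 1) (by omega)]
    zero' X Y f hX hY := by
      rw [ObjectProperty.shift_zero] at hX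
      rw [sub_self, ObjectProperty.shift_zero] at hY
      exact hY f hX
    le_zero_le := by
      rw [ObjectProperty.shift_zero]
      exact hS.shift_mem
    ge_one_le := by
      rw [sub_self, zero_sub, ObjectProperty.shift_zero]
      exact fun Y hY => hS.rightOrthogonal_shift_neg_one hY
    exists_triangle_zero_one A := by
      obtain ⟨x, α, hα⟩ := h A
      obtain ⟨z, β, γ, mem⟩ := distinguished_cocone_triangle α
      refine ⟨x, z, ?_, ?_, α, β, γ, mem⟩
      · rw [ObjectProperty.shift_zero]
        exact hα.mem
      · rw [sub_self, ObjectProperty.shift_zero]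
        exact hα.rightOrthogonal_obj₃ hS mem }

lemma tStructure_le_zero_iff (hS : IsPreaisle S)
    (h : ∀ t : C, ∃ (x : C) (α : x ⟶ t), IsCoreflection S α) (y : C) :
    (hS.tStructure h).le 0 y ↔ y ∈ S := by
  have := hS.isClosedUnderIsomorphisms
  change ObjectProperty.shift (· ∈ S) 0 y ↔ y ∈ S
  rw [ObjectProperty.shift_zero]

end IsPreaisle

end

/-- a pre-aisle `S` equals `T^{≤0}` for some t-structure on `T` if and only
if for every object `t` the functor `H_S(-,t) : Tᵒᵖ ⥤ Ab` is representable, i.e. there are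
an object `x` and a natural family of bijections `Hom(y,x) ≃ H_S(y,t)`. -/
theorem statement11 (S : Set C) (hS : IsPreaisle S) :
    (∃ τ : Triangulated.TStructure C, ∀ y : C, τ.le 0 y ↔ y ∈ S) ↔
      (∀ t : C, ∃ (x : C) (φ : ∀ y : C, (y ⟶ x) → HQuot S y t),
        (∀ y : C, Function.Bijective (φ y)) ∧
        (∀ {y' y : C} (e : y' ⟶ y) (g : y ⟶ x) (h : HTilde S y t),
          φ y g = Quot.mk _ h → φ y' (e ≫ g) = Quot.mk _ ⟨h.s, h.mem, e ≫ h.f, h.g⟩)) := by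
  constructor
  · rintro ⟨τ, hτ⟩ t
    obtain ⟨x, z, hx, hz, α, β, γ, mem⟩ := τ.exists_triangle t 0 1 (by omega)
    have hα : IsCoreflection S α := hS.isCoreflection_of_distTriang mem ((hτ x).1 hx)
      fun w c hw => τ.zero' c ((hτ w).2 hw) hz
    exact ⟨x, fun y g => HQuot.mk hα.mem g α, hα.bijective_mk hS,
      fun e _ _ h => congrArg (HQuot.precomp e) h⟩
  · intro hrep
    have hcoref : ∀ t : C, ∃ (x : C) (α : x ⟶ t), IsCoreflection S α := fun t => by
      obtain ⟨x, φ, hφ, hnat⟩ := hrep t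
      exact ⟨x, hS.exists_isCoreflection_of_represents hφ hnat⟩
    exact ⟨hS.tStructure hcoref, hS.tStructure_le_zero_iff hcoref⟩
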